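/- Let k ≥ 1 be a natural number, let B be a k × k real matrix with all entries nonnegative, and let t > 0 be a real number. Then trace((1 + t • B)^k) = k if and only if trace(B^m) = 0 for every m with 1 ≤ m ≤ k. -/
import Mathlib


open Matrix

lemma pow_entry_nonneg {k : ℕ} (B : Matrix (Fin k) (Fin k) ℝ)
    (hB : ∀ i j, 0 ≤ B i j) : ∀ m i j, 0 ≤ (B ^ m) i j := by
  intro m
  induction m with
  | zero => intro i j; simp [Matrix.one_apply]; split <;> norm_num
  | succ n ih =>
    intro i j
    rw [pow_succ, Matrix.mul_apply]
    exact Finset.sum_nonneg fun l _ => mul_nonneg (ih i l) (hB l j)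

/-- For an entrywise-nonnegative real matrix `B` and `t > 0`, the acyclicity functional
`trace((1 + t • B)^k)` equals `k` iff all the traces `trace(B^m)`, `1 ≤ m ≤ k`, vanish. -/
theorem trace_one_add_smul_pow_eq_iff (k : ℕ) (hk : 1 ≤ k)
    (B : Matrix (Fin k) (Fin k) ℝ) (hB : ∀ i j, 0 ≤ B i j) (t : ℝ) (ht : 0 < t) :
    ((1 + t • B) ^ k).trace = (k : ℝ) ↔
      ∀ m : ℕ, 1 ≤ m → m ≤ k → (B ^ m).trace = 0 := by
  have htr : ∀ m, 0 ≤ (B ^ m).trace := fun m =>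
    Finset.sum_nonneg fun i _ => pow_entry_nonneg B hB m i i
  have expand : (1 + t • B) ^ k
      = ∑ m ∈ Finset.range (k + 1), ((k.choose m : ℝ) * t ^ m) • B ^ m := by
    rw [add_comm, (Commute.one_right (t • B)).add_pow]
    refine Finset.sum_congr rfl fun m _ => ?_
    rw [one_pow, mul_one, smul_pow]
    rw [show ((k.choose m : Matrix (Fin k) (Fin k) ℝ)) = (k.choose m : ℝ) • 1 by
      simp [Nat.cast_smul_eq_nsmul]]
    rw [mul_smul_comm, mul_one, smul_smul, mul_comm]
  have htrace : ((1 + t • B) ^ k).trace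
      = (∑ m ∈ Finset.range k, ((k.choose (m + 1) : ℝ) * t ^ (m + 1)) * (B ^ (m + 1)).trace)
        + (k : ℝ) := by
    rw [expand, trace_sum]
    simp only [trace_smul, smul_eq_mul]
    rw [Finset.sum_range_succ']
    simp [trace_one]
  have hnonneg : ∀ m ∈ Finset.range k,
      0 ≤ ((k.choose (m + 1) : ℝ) * t ^ (m + 1)) * (B ^ (m + 1)).trace := fun m _ =>
    mul_nonneg (mul_nonneg (Nat.cast_nonneg _) (le_of_lt (pow_pos ht _))) (htr _)
  rw [htrace]
  constructor
  · intro h m hm1 hmk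
    have hsum : (∑ m ∈ Finset.range k, ((k.choose (m + 1) : ℝ) * t ^ (m + 1))
        * (B ^ (m + 1)).trace) = 0 := by linarith
    have hall := (Finset.sum_eq_zero_iff_of_nonneg hnonneg).mp hsum
    have hmem : m - 1 ∈ Finset.range k := Finset.mem_range.mpr (by omega)
    have := hall _ hmem
    have hm' : m - 1 + 1 = m := by omega
    rw [hm'] at this
    have hc : (0 : ℝ) < (k.choose m : ℝ) * t ^ m := by
      have : 0 < k.choose m := Nat.choose_pos hmk
      positivity
    exact (mul_eq_zero.mp this).resolve_left (ne_of_gt hc)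
  · intro h
    have : (∑ m ∈ Finset.range k, ((k.choose (m + 1) : ℝ) * t ^ (m + 1))
        * (B ^ (m + 1)).trace) = 0 := by
      refine Finset.sum_eq_zero fun m hm => ?_
      rw [h (m + 1) (by omega) (by simpa using Finset.mem_range.mp hm), mul_zero]
    rw [this, zero_add]
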